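/- arXiv:1611.08962 — 4 statements merged into one kernel-verified Lean document; each statement's English description precedes it below -/
import Mathlib

section
/- Let d ≥ 1 and let v ∈ ℂ^d be a unit vector that is unbiased to the Fourier basis, i.e. |⟨f_j, v⟩|² = 1/d for all j = 0,…,d−1. Then the cyclic shifts v^(0), v^(1), …, v^(d−1) of v form an orthonormal basis of ℂ^d, and every vector v^(k) of this basis is unbiased to the Fourier basis, i.e. |⟨f_j, v^(k)⟩|² = 1/d for all j and k. -/
open scoped ComplexInnerProductSpace

/-- `ω d = exp(2πi/d)`, a primitive `d`-th root of unity. -/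
noncomputable def omegaRoot (d : ℕ) : ℂ := Complex.exp (2 * Real.pi * Complex.I / d)

/-- The `j`-th Fourier basis vector of `ℂ^d`, with components `ω_d^{jm}/√d`. -/
noncomputable def fourierVec (d : ℕ) (j : Fin d) : EuclideanSpace ℂ (Fin d) :=
  WithLp.toLp 2 (fun m : Fin d => omegaRoot d ^ ((j : ℕ) * (m : ℕ)) / (Real.sqrt d : ℂ))

/-- The cyclic shift `v^(k)` of `v`, with components `(v^(k))_{(m+k) mod d} = v_m`,
i.e. `(v^(k))_n = v_{(n-k) mod d}`. -/
def cyclicShift {d : ℕ} (k : Fin d) (v : EuclideanSpace ℂ (Fin d)) :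
    EuclideanSpace ℂ (Fin d) :=
  WithLp.toLp 2 (fun n => v (n - k))

/-
Shifting by `k` multiplies the `j`-th Fourier coefficient by the unimodular factor `ω^(-jk)`,
so every shift of `v` is again unbiased. By Parseval,
`⟪v^(k), v^(l)⟫ = ∑ⱼ |⟪f_j, v⟫|² ω^(j(k-l)) = (1/d) ∑ⱼ ω^(j(k-l)) = δ_kl`,
so the `d` shifts are orthonormal and hence an orthonormal basis.
-/

open ComplexConjugate

theorem Orthonormal.exists_orthonormalBasis_of_card_eq_finrank {𝕜 E ι : Type*} [RCLike 𝕜]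
    [NormedAddCommGroup E] [InnerProductSpace 𝕜 E] [FiniteDimensional 𝕜 E] [Fintype ι] {v : ι → E}
    (hv : Orthonormal 𝕜 v) (h : Fintype.card ι = Module.finrank 𝕜 E) :
    ∃ B : OrthonormalBasis ι 𝕜 E, ⇑B = v :=
  ⟨OrthonormalBasis.mk hv (hv.linearIndependent.span_eq_top_of_card_eq_finrank' h).ge,
    OrthonormalBasis.coe_mk _ _⟩

theorem IsPrimitiveRoot.sum_pow_div_pow_pow_eq_ite {K : Type*} [Field K] {ζ : K} {n : ℕ}
    (hζ : IsPrimitiveRoot ζ n) (i j : Fin n) :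
    ∑ m : Fin n, (ζ ^ (i : ℕ) / ζ ^ (j : ℕ)) ^ (m : ℕ) = if i = j then (n : K) else 0 := by
  have hζ0 : ζ ≠ 0 := hζ.ne_zero i.pos.ne'
  rw [Fin.sum_univ_eq_sum_range (fun m => (ζ ^ (i : ℕ) / ζ ^ (j : ℕ)) ^ m)]
  split_ifs with hij
  · simp [hij, hζ0]
  · have hne : ζ ^ (i : ℕ) / ζ ^ (j : ℕ) ≠ 1 := by
      rw [Ne, div_eq_one_iff_eq (pow_ne_zero _ hζ0)]
      exact fun h => hij (Fin.ext (hζ.pow_inj i.isLt j.isLt h))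
    have hpow : (ζ ^ (i : ℕ) / ζ ^ (j : ℕ)) ^ n = 1 := by
      rw [div_pow, ← pow_mul, ← pow_mul, pow_mul', pow_mul', hζ.pow_eq_one, one_pow, one_pow,
        div_one]
    rw [geom_sum_eq hne, hpow, sub_self, zero_div]

variable {d : ℕ}

theorem isPrimitiveRoot_omegaRoot [NeZero d] : IsPrimitiveRoot (omegaRoot d) d := by
  simpa [omegaRoot] using Complex.isPrimitiveRoot_exp d (NeZero.ne d)

theorem omegaRoot_pow_self : omegaRoot d ^ d = 1 := by
  rcases eq_zero_or_neZero d with rfl | _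
  · exact pow_zero _
  · exact isPrimitiveRoot_omegaRoot.pow_eq_one

theorem conj_omegaRoot : conj (omegaRoot d) = (omegaRoot d)⁻¹ := by
  rw [omegaRoot, ← Complex.exp_conj, ← Complex.exp_neg]
  congr 1
  simp only [map_div₀, map_mul, map_ofNat, Complex.conj_ofReal, Complex.conj_I, map_natCast]
  ring

theorem sum_pow_mul_cyclicShift {c : ℂ} (hc : c ^ d = 1) (k : Fin d)
    (x : EuclideanSpace ℂ (Fin d)) :
    ∑ n : Fin d, c ^ (n : ℕ) * cyclicShift k x n =
      c ^ (k : ℕ) * ∑ m : Fin d, c ^ (m : ℕ) * x m := by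
  have : NeZero d := ⟨k.pos.ne'⟩
  rw [← Equiv.sum_comp (Equiv.addRight k), Finset.mul_sum]
  refine Finset.sum_congr rfl fun m _ => ?_
  simp only [Equiv.coe_addRight, cyclicShift, PiLp.toLp_apply, add_sub_cancel_right, Fin.val_add]
  rw [← pow_eq_pow_mod _ hc]
  ring

theorem inner_fourierVec (j : Fin d) (x : EuclideanSpace ℂ (Fin d)) :
    ⟪fourierVec d j, x⟫ =
      (Real.sqrt d : ℂ)⁻¹ * ∑ m : Fin d, ((omegaRoot d ^ (j : ℕ))⁻¹) ^ (m : ℕ) * x m := by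
  simp only [PiLp.inner_apply, RCLike.inner_apply, Finset.mul_sum, fourierVec,
    map_div₀, map_pow, conj_omegaRoot, Complex.conj_ofReal]
  refine Finset.sum_congr rfl fun m _ => ?_
  rw [pow_mul, inv_pow]
  ring

theorem inner_fourierVec_cyclicShift (j k : Fin d) (x : EuclideanSpace ℂ (Fin d)) :
    ⟪fourierVec d j, cyclicShift k x⟫ =
      ((omegaRoot d ^ (j : ℕ))⁻¹) ^ (k : ℕ) * ⟪fourierVec d j, x⟫ := by
  have hc : ((omegaRoot d ^ (j : ℕ))⁻¹) ^ d = 1 := by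
    rw [inv_pow, ← pow_mul, mul_comm, pow_mul, omegaRoot_pow_self, one_pow, inv_one]
  rw [inner_fourierVec, inner_fourierVec, sum_pow_mul_cyclicShift hc]
  ring

theorem norm_omegaRoot : ‖omegaRoot d‖ = 1 := by
  rcases eq_zero_or_neZero d with rfl | _
  · simp [omegaRoot]
  · exact isPrimitiveRoot_omegaRoot.norm'_eq_one (NeZero.ne d)

theorem orthonormal_fourierVec : Orthonormal ℂ (fourierVec d) := by
  rw [orthonormal_iff_ite]
  intro i j
  have : NeZero d := ⟨i.pos.ne'⟩
  have hterm : ∀ m : Fin d, ((omegaRoot d ^ (i : ℕ))⁻¹) ^ (m : ℕ) * fourierVec d j m =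
      (omegaRoot d ^ (j : ℕ) / omegaRoot d ^ (i : ℕ)) ^ (m : ℕ) * (Real.sqrt d : ℂ)⁻¹ := by
    intro m
    simp only [fourierVec, PiLp.toLp_apply]
    rw [pow_mul]
    ring
  have hsqrt : (Real.sqrt d : ℂ)⁻¹ * (Real.sqrt d : ℂ)⁻¹ = (d : ℂ)⁻¹ := by
    rw [← mul_inv, ← Complex.ofReal_mul, Real.mul_self_sqrt (Nat.cast_nonneg d),
      Complex.ofReal_natCast]
  rw [inner_fourierVec, Finset.sum_congr rfl fun m _ => hterm m, ← Finset.sum_mul,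
    isPrimitiveRoot_omegaRoot.sum_pow_div_pow_pow_eq_ite]
  rcases eq_or_ne i j with rfl | hij
  · rw [if_pos rfl, if_pos rfl, mul_left_comm, hsqrt, mul_inv_cancel₀ (NeZero.ne _)]
  · rw [if_neg hij.symm, if_neg hij, zero_mul, mul_zero]

theorem norm_inner_fourierVec_cyclicShift (j k : Fin d) (x : EuclideanSpace ℂ (Fin d)) :
    ‖⟪fourierVec d j, cyclicShift k x⟫‖ = ‖⟪fourierVec d j, x⟫‖ := by
  rw [inner_fourierVec_cyclicShift, norm_mul, norm_pow, norm_inv, norm_pow, norm_omegaRoot,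
    one_pow, inv_one, one_pow, one_mul]

theorem orthonormal_cyclicShift {v : EuclideanSpace ℂ (Fin d)}
    (hub : ∀ j : Fin d, ‖⟪fourierVec d j, v⟫‖ ^ 2 = 1 / d) :
    Orthonormal ℂ (fun k : Fin d => cyclicShift k v) := by
  rw [orthonormal_iff_ite]
  intro k l
  have : NeZero d := ⟨k.pos.ne'⟩
  obtain ⟨F, hF⟩ :=
    (orthonormal_fourierVec (d := d)).exists_orthonormalBasis_of_card_eq_finrank (by simp)
  have hterm : ∀ j : Fin d,
      ⟪cyclicShift k v, fourierVec d j⟫ * ⟪fourierVec d j, cyclicShift l v⟫ =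
        (omegaRoot d ^ (k : ℕ) / omegaRoot d ^ (l : ℕ)) ^ (j : ℕ) * (d : ℂ)⁻¹ := by
    intro j
    rw [← inner_conj_symm, inner_fourierVec_cyclicShift, inner_fourierVec_cyclicShift]
    simp only [map_mul, map_pow, map_inv₀, conj_omegaRoot, ← inv_pow, inv_inv]
    calc _ = (omegaRoot d ^ (k : ℕ) / omegaRoot d ^ (l : ℕ)) ^ (j : ℕ) *
          (conj ⟪fourierVec d j, v⟫ * ⟪fourierVec d j, v⟫) := by ring
      _ = _ := by rw [Complex.conj_mul', ← Complex.ofReal_pow, hub j]; push_cast; ring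
  rw [← F.sum_inner_mul_inner, hF, Finset.sum_congr rfl fun j _ => hterm j, ← Finset.sum_mul,
    isPrimitiveRoot_omegaRoot.sum_pow_div_pow_pow_eq_ite]
  split_ifs
  · exact mul_inv_cancel₀ (NeZero.ne _)
  · exact zero_mul _

theorem stmt_0_general (d : ℕ) (v : EuclideanSpace ℂ (Fin d))
    (hub : ∀ j : Fin d, ‖⟪fourierVec d j, v⟫‖ ^ 2 = 1 / d) :
    (∃ B : OrthonormalBasis (Fin d) ℂ (EuclideanSpace ℂ (Fin d)),
        ∀ k : Fin d, B k = cyclicShift k v) ∧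
      ∀ (j k : Fin d), ‖⟪fourierVec d j, cyclicShift k v⟫‖ ^ 2 = 1 / d := by
  obtain ⟨B, hB⟩ :=
    (orthonormal_cyclicShift hub).exists_orthonormalBasis_of_card_eq_finrank (by simp)
  exact ⟨⟨B, congrFun hB⟩, fun j k => by rw [norm_inner_fourierVec_cyclicShift, hub]⟩

theorem stmt_0 (d : ℕ) (hd : 1 ≤ d) (v : EuclideanSpace ℂ (Fin d)) (hv : ‖v‖ = 1)
    (hub : ∀ j : Fin d, ‖⟪fourierVec d j, v⟫‖ ^ 2 = 1 / d) :
    (∃ B : OrthonormalBasis (Fin d) ℂ (EuclideanSpace ℂ (Fin d)),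
        ∀ k : Fin d, B k = cyclicShift k v) ∧
      ∀ (j k : Fin d), ‖⟪fourierVec d j, cyclicShift k v⟫‖ ^ 2 = 1 / d :=
  stmt_0_general d v hub
end

section
/- For every real r > 0 and every θ ∈ ℝ with sin θ ≠ 0, there exist a real s > 0 and φ ∈ ℝ with sin φ ≠ 0 and sin(θ − φ) ≠ 0 such that r·|sin θ| = s·|sin φ| and s·|sin φ| = r·s·|sin(θ − φ)|. -/
theorem stmt_16 (r θ : ℝ) (hr : 0 < r) (hθ : Real.sin θ ≠ 0) :
    ∃ s φ : ℝ, 0 < s ∧ Real.sin φ ≠ 0 ∧ Real.sin (θ - φ) ≠ 0 ∧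
      r * |Real.sin θ| = s * |Real.sin φ| ∧
      s * |Real.sin φ| = r * s * |Real.sin (θ - φ)| := by
  set f : ℝ → ℝ := fun φ => |Real.sin φ| - r * |Real.sin (θ - φ)| with hf
  have hcont : Continuous f := by
    apply Continuous.sub
    · exact Real.continuous_sin.abs
    · exact continuous_const.mul ((Real.continuous_sin.comp (continuous_const.sub continuous_id)).abs)
  have hf0 : f 0 = -(r * |Real.sin θ|) := by simp [hf]
  have hfθ : f θ = |Real.sin θ| := by simp [hf]
  have hpos : 0 < |Real.sin θ| := abs_pos.mpr hθ
  have hmem : (0 : ℝ) ∈ Set.uIcc (f 0) (f θ) := by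
    rw [hf0, hfθ]
    exact Set.mem_uIcc.mpr (Or.inl ⟨by nlinarith, le_of_lt hpos⟩)
  obtain ⟨φ, _, hroot⟩ := intermediate_value_uIcc (hcont.continuousOn (s := Set.uIcc 0 θ)) hmem
  have hroot' : |Real.sin φ| = r * |Real.sin (θ - φ)| := by
    have := hroot; simp [hf] at this; linarith [this]
  have hsin2 : Real.sin (θ - φ) ≠ 0 := by
    intro h
    have hsφ : Real.sin φ = 0 := by
      have : |Real.sin φ| = 0 := by rw [hroot', h]; simp
      exact abs_eq_zero.mp this
    apply hθ
    have : θ = (θ - φ) + φ := by ring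
    rw [this, Real.sin_add, h, hsφ]; ring
  have hsin1 : Real.sin φ ≠ 0 := by
    intro h
    apply hsin2
    have : r * |Real.sin (θ - φ)| = 0 := by rw [← hroot', h]; simp
    have := (mul_eq_zero.mp this).resolve_left (ne_of_gt hr)
    exact abs_eq_zero.mp this
  have hφpos : 0 < |Real.sin φ| := abs_pos.mpr hsin1
  refine ⟨r * |Real.sin θ| / |Real.sin φ|, φ, ?_, hsin1, hsin2, ?_, ?_⟩
  · positivity
  · field_simp
  · rw [hroot']; field_simp
end

section
/- Let r > 0 and θ ∈ ℝ with sin θ ≠ 0 and 1 + r·cos θ ≠ 0. Set φ = arctan(r·sin θ / (1 + r·cos θ)). Then sin φ ≠ 0 and sin(θ − φ) ≠ 0, and with s = r·|sin θ| / |sin φ| > 0 one has r·|sin θ| = s·|sin φ| = r·s·|sin(θ − φ)|; in particular |sin φ| = r·|sin(θ − φ)|. -/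
theorem stmt_17 (r θ : ℝ) (hr : 0 < r) (hθ : Real.sin θ ≠ 0)
    (hden : 1 + r * Real.cos θ ≠ 0)
    (φ : ℝ) (hφ : φ = Real.arctan (r * Real.sin θ / (1 + r * Real.cos θ)))
    (s : ℝ) (hs : s = r * |Real.sin θ| / |Real.sin φ|) :
    Real.sin φ ≠ 0 ∧ Real.sin (θ - φ) ≠ 0 ∧ 0 < s ∧
      r * |Real.sin θ| = s * |Real.sin φ| ∧
      s * |Real.sin φ| = r * s * |Real.sin (θ - φ)| ∧
      |Real.sin φ| = r * |Real.sin (θ - φ)| := by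
  have hcos : 0 < Real.cos φ := by
    rw [hφ]
    exact Real.cos_arctan_pos _
  have htan : Real.tan φ = r * Real.sin θ / (1 + r * Real.cos θ) := by
    rw [hφ, Real.tan_arctan]
  have hkey : Real.sin φ * (1 + r * Real.cos θ) = r * Real.sin θ * Real.cos φ := by
    have := htan
    rw [Real.tan_eq_sin_div_cos] at this
    field_simp at this
    linarith [this]
  have hmain : Real.sin φ = r * Real.sin (θ - φ) := by
    rw [Real.sin_sub]
    nlinarith [hkey]
  have hsφ : Real.sin φ ≠ 0 := by
    intro h
    have : r * Real.sin θ * Real.cos φ = 0 := by rw [← hkey, h]; ring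
    rcases mul_eq_zero.1 this with h1 | h2
    · rcases mul_eq_zero.1 h1 with h3 | h4
      · exact hr.ne' h3
      · exact hθ h4
    · exact hcos.ne' h2
  have hsθφ : Real.sin (θ - φ) ≠ 0 := by
    intro h
    apply hsφ
    rw [hmain, h, mul_zero]
  have habs : |Real.sin φ| = r * |Real.sin (θ - φ)| := by
    rw [hmain, abs_mul, abs_of_pos hr]
  have hspos : 0 < s := by
    rw [hs]
    positivity
  refine ⟨hsφ, hsθφ, hspos, ?_, ?_, habs⟩
  · rw [hs]
    field_simp
  · rw [habs]; ring
end

section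
/- There do not exist real numbers r, s, t > 0 and θ, φ, ν ∈ ℝ such that the six quantities r·|sin θ|, s·|sin φ|, t·|sin ν|, r·s·|sin(θ − φ)|, r·t·|sin(θ − ν)|, s·t·|sin(φ − ν)| are all equal and nonzero. -/
lemma sign_mul_aux (c x y : ℝ) (hx : x = c ∨ x = -c) (hy : y = c ∨ y = -c) :
    x * y = c * c ∨ x * y = -(c * c) := by
  rcases hx with h | h <;> rcases hy with h' | h' <;> rw [h, h'] <;>
    [left; right; right; left] <;> ring

theorem stmt_18 :
    ¬ ∃ (r s t θ φ ν : ℝ), 0 < r ∧ 0 < s ∧ 0 < t ∧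
      r * |Real.sin θ| ≠ 0 ∧
      r * |Real.sin θ| = s * |Real.sin φ| ∧
      r * |Real.sin θ| = t * |Real.sin ν| ∧
      r * |Real.sin θ| = r * s * |Real.sin (θ - φ)| ∧
      r * |Real.sin θ| = r * t * |Real.sin (θ - ν)| ∧
      r * |Real.sin θ| = s * t * |Real.sin (φ - ν)| := by
  rintro ⟨r, s, t, θ, φ, ν, hr, hs, ht, hne, h1, h2, h3, h4, h5⟩
  set c := r * |Real.sin θ| with hc
  have hc0 : 0 < c := lt_of_le_of_ne (by positivity) (Ne.symm hne)
  have key : (r * Real.sin θ) * (s * t * Real.sin (φ - ν))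
      - (s * Real.sin φ) * (r * t * Real.sin (θ - ν))
      + (t * Real.sin ν) * (r * s * Real.sin (θ - φ)) = 0 := by
    rw [Real.sin_sub, Real.sin_sub, Real.sin_sub]; ring
  have a1 : |r * Real.sin θ| = c := by
    rw [abs_mul, abs_of_pos hr]
  have a2 : |s * Real.sin φ| = c := by
    rw [abs_mul, abs_of_pos hs, ← h1]
  have a3 : |t * Real.sin ν| = c := by
    rw [abs_mul, abs_of_pos ht, ← h2]
  have a4 : |r * s * Real.sin (θ - φ)| = c := by
    rw [abs_mul, abs_of_pos (mul_pos hr hs), ← h3]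
  have a5 : |r * t * Real.sin (θ - ν)| = c := by
    rw [abs_mul, abs_of_pos (mul_pos hr ht), ← h4]
  have a6 : |s * t * Real.sin (φ - ν)| = c := by
    rw [abs_mul, abs_of_pos (mul_pos hs ht), ← h5]
  have m1 := sign_mul_aux c _ _ ((abs_eq hc0.le).mp a1) ((abs_eq hc0.le).mp a6)
  have m2 := sign_mul_aux c _ _ ((abs_eq hc0.le).mp a2) ((abs_eq hc0.le).mp a5)
  have m3 := sign_mul_aux c _ _ ((abs_eq hc0.le).mp a3) ((abs_eq hc0.le).mp a4)
  have hcc : 0 < c * c := mul_pos hc0 hc0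
  rcases m1 with e1 | e1 <;> rcases m2 with e2 | e2 <;> rcases m3 with e3 | e3 <;>
    linarith
end
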